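/- Let $X = \{x \in C[0,1] : x(0) = x(1)\}$, $\alpha \in (0,1)$ irrational, and $l(t) = e^{-1/(t-1/2)^2}$ for $t \neq 1/2$, $l(1/2) = 0$. Let $(Bx)(t) = l(t)x(t \dotplus \alpha)$ and $(Ax)(t) = x(1/2)$, and $C = A + B$. If $z \in X$ satisfies $Cz = rz$ for some real $r > 1$, then $z = 0$, assuming $B$ is quasinilpotent. -/

import Mathlib

/-!
The weight `l` vanishes at `1/2`, so the eigen-equation at `t = 1/2` forces `z(1/2) = 0` (as
`r ≠ 1`) and kills the rank-one part `A z`. Then `z` is an eigenvector of `B` for `r ≠ 0`, which a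
quasinilpotent operator cannot have.
-/

namespace ContinuousLinearMap

variable {𝕜 E : Type*} [NormedField 𝕜] [NormedAddCommGroup E] [NormedSpace 𝕜 E]

theorem eq_zero_of_apply_eq_smul_of_notMem_spectrum {T : E →L[𝕜] E} {r : 𝕜}
    (hr : r ∉ spectrum 𝕜 T) {z : E} (hz : T z = r • z) : z = 0 := by
  refine (isHomeomorph_of_isUnit (spectrum.notMem_iff.mp hr)).injective ?_
  simp [hz]

theorem eq_zero_of_apply_eq_smul_of_spectralRadius_eq_zero {T : E →L[𝕜] E}
    (hT : spectralRadius 𝕜 T = 0) {r : 𝕜} (hr : r ≠ 0) {z : E} (hz : T z = r • z) : z = 0 := by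
  refine eq_zero_of_apply_eq_smul_of_notMem_spectrum (spectrum.notMem_iff.mpr <|
    spectrum.mem_resolventSet_iff.mp <| spectrum.mem_resolventSet_of_spectralRadius_lt ?_) hz
  simpa [hT] using hr

end ContinuousLinearMap

theorem stmt5 (α : ℝ)
    (l : C(AddCircle (1 : ℝ), ℝ))
    (hl : ∀ s : ℝ, 0 ≤ s → s < 1 →
      l ((s : ℝ) : AddCircle (1 : ℝ)) =
        if s = 1 / 2 then 0 else Real.exp (-((s - 1 / 2) ^ 2)⁻¹))
    (A B : C(AddCircle (1 : ℝ), ℝ) →L[ℝ] C(AddCircle (1 : ℝ), ℝ))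
    (hA : ∀ (x : C(AddCircle (1 : ℝ), ℝ)) (t : AddCircle (1 : ℝ)),
      A x t = x (((1 / 2 : ℝ) : AddCircle (1 : ℝ))))
    (hB : ∀ (x : C(AddCircle (1 : ℝ), ℝ)) (t : AddCircle (1 : ℝ)),
      B x t = l t * x (t + ((α : ℝ) : AddCircle (1 : ℝ))))
    (hqn : spectralRadius ℝ B = 0)
    (r : ℝ) (hr : 1 < r) (z : C(AddCircle (1 : ℝ), ℝ))
    (hz : (A + B) z = r • z) :
    z = 0 := by
  set half : AddCircle (1 : ℝ) := ((1 / 2 : ℝ) : AddCircle (1 : ℝ))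
  have hz_apply (t : AddCircle (1 : ℝ)) : z half + B z t = r * z t := by
    simpa [hA] using DFunLike.congr_fun hz t
  have hl_half : l half = 0 := (hl (1 / 2) (by norm_num) (by norm_num)).trans (if_pos rfl)
  have hz_half : z half = 0 := by
    have h := hz_apply half
    rw [hB, hl_half, zero_mul, add_zero] at h
    have : (r - 1) * z half = 0 := by linarith
    exact (mul_eq_zero.mp this).resolve_left (by linarith)
  have hBz : B z = r • z := by
    ext t
    simpa [hz_half] using hz_apply t
  exact ContinuousLinearMap.eq_zero_of_apply_eq_smul_of_spectralRadius_eq_zero hqn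
    (by positivity) hBz
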